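/- arXiv:1511.08783 — 5 statements merged into one kernel-verified Lean document; each statement's English description precedes it below -/
import Mathlib

section
/- Let H be a weak Hopf algebra, A an algebra, e, f ∈ Hom(H,A) idempotents under convolution, u an (e,f)-invertible element of Hom(H,A), and define h · a = u(h₁) a u⁻¹(h₂). Then for all h ∈ H and a, b ∈ A: h · (ab) = (h₁ · a)(h₂ · b) if and only if f(h₁)(ab)f(h₂) = f(h₁) a f(h₂) b f(h₃) for all h, a, b. -/
open TensorProduct LinearMap

noncomputable section

section Defs

variable (k : Type*) [CommRing k]

/-- Convolution product on `Hom(C, A)`: `(φ * ψ)(c) = φ(c₁) ψ(c₂)`. -/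
def conv {C A : Type*} [AddCommMonoid C] [Module k C] [Coalgebra k C]
    [Ring A] [Algebra k A] (φ ψ : C →ₗ[k] A) : C →ₗ[k] A :=
  LinearMap.mul' k A ∘ₗ TensorProduct.map φ ψ ∘ₗ Coalgebra.comul

variable (H : Type*) [Ring H] [Algebra k H] [Coalgebra k H]

/-- The target counital map `ε_t(h) = ε(1₁ h) 1₂`. -/
def epsT : H →ₗ[k] H :=
  (TensorProduct.lid k H).toLinearMap ∘ₗ TensorProduct.map Coalgebra.counit LinearMap.id
    ∘ₗ LinearMap.mulLeft k (Coalgebra.comul (R := k) (1 : H))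
    ∘ₗ (TensorProduct.mk k H H).flip 1

/-- The source counital map `ε_s(h) = 1₁ ε(h 1₂)`. -/
def epsS : H →ₗ[k] H :=
  (TensorProduct.rid k H).toLinearMap ∘ₗ TensorProduct.map LinearMap.id Coalgebra.counit
    ∘ₗ LinearMap.mulRight k (Coalgebra.comul (R := k) (1 : H))
    ∘ₗ TensorProduct.mk k H H 1

/-- The axioms making the algebra-and-coalgebra `H` a weak Hopf algebra with
antipode `S`. -/
structure IsWeakHopf (S : H →ₗ[k] H) : Prop where
  comul_mul : ∀ g h : H,
    Coalgebra.comul (R := k) (g * h) = Coalgebra.comul (R := k) g * Coalgebra.comul (R := k) h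
  comul_one_left :
    TensorProduct.map (Coalgebra.comul (R := k)) LinearMap.id (Coalgebra.comul (R := k) (1 : H)) =
      (Coalgebra.comul (R := k) (1 : H) ⊗ₜ (1 : H)) *
        ((TensorProduct.assoc k H H H).symm ((1 : H) ⊗ₜ Coalgebra.comul (R := k) (1 : H)))
  comul_one_right :
    TensorProduct.map (Coalgebra.comul (R := k)) LinearMap.id (Coalgebra.comul (R := k) (1 : H)) =
      ((TensorProduct.assoc k H H H).symm ((1 : H) ⊗ₜ Coalgebra.comul (R := k) (1 : H))) *
        (Coalgebra.comul (R := k) (1 : H) ⊗ₜ (1 : H))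
  counit_mul_left : ∀ h g l : H,
    Coalgebra.counit (R := k) (h * g * l) =
      conv k (Coalgebra.counit ∘ₗ LinearMap.mulLeft k h)
        (Coalgebra.counit ∘ₗ LinearMap.mulRight k l) g
  counit_mul_right : ∀ h g l : H,
    Coalgebra.counit (R := k) (h * g * l) =
      conv k (Coalgebra.counit ∘ₗ LinearMap.mulRight k l)
        (Coalgebra.counit ∘ₗ LinearMap.mulLeft k h) g
  conv_id_antipode : conv k LinearMap.id S = epsT k H
  conv_antipode_id : conv k S LinearMap.id = epsS k H
  conv_antipode_id_antipode : conv k (conv k S LinearMap.id) S = S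

/-- `smul3 u v a` is the linear map `h ↦ u(h₁) a v(h₂)` (Sweedler notation). -/
def smul3 {A : Type*} [Ring A] [Algebra k A] (u v : H →ₗ[k] A) (a : A) : H →ₗ[k] A :=
  TensorProduct.lift ((LinearMap.mul k A ∘ₗ LinearMap.mulRight k a ∘ₗ u).compl₂ v)
    ∘ₗ Coalgebra.comul

/-- The bilinear map `t(g, h) = v(h₁) v(g₁) u(g₂ h₂)`, as a linear map on `H ⊗ H`. -/
def tmap {A : Type*} [Ring A] [Algebra k A] (u v : H →ₗ[k] A) : H ⊗[k] H →ₗ[k] A :=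
  LinearMap.mul' k A ∘ₗ
    TensorProduct.map
      (LinearMap.mul' k A ∘ₗ TensorProduct.map v v ∘ₗ (TensorProduct.comm k H H).toLinearMap)
      (u ∘ₗ LinearMap.mul' k H) ∘ₗ
    (TensorProduct.tensorTensorTensorComm k H H H H).toLinearMap ∘ₗ
    TensorProduct.map Coalgebra.comul Coalgebra.comul

end Defs

/-!
In the convolution algebra `Hom(H, A)`, the relations `u⁻¹ * u = f` and `u * f = u` make
`x ↦ u * x * u⁻¹` injective and multiplicative on the corner `f * Hom(H, A) * f`. Since
`h ↦ h · a` is `u * φ_a * u⁻¹` with `φ_a = (h ↦ φ_{f,h}(a))` in that corner, multiplicativity of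
`h · -` and of `φ_{f,-}` are equivalent.
-/

section Corner

variable {M : Type*} [Semigroup M] {f u v : M}

theorem isIdempotentElem_of_mul_eq (hvu : v * u = f) (huf : u * f = u) : IsIdempotentElem f := by
  rw [IsIdempotentElem]
  nth_rw 1 [← hvu]
  rw [mul_assoc, huf, hvu]

theorem mul_conj_mul_eq_self_of_mem_corner (hvu : v * u = f) (huf : u * f = u) {x : M}
    (hx : x ∈ Subsemigroup.corner f) : v * (u * x * v) * u = x := by
  obtain ⟨hfx, hxf⟩ := (Subsemigroup.mem_corner_iff (isIdempotentElem_of_mul_eq hvu huf)).mp hx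
  simp only [← mul_assoc, hvu, hfx]
  rw [mul_assoc, hvu, hxf]

theorem conj_mul_conj (hvu : v * u = f) {y : M} (hy : y * f = y) (z : M) :
    u * y * v * (u * z * v) = u * (y * z) * v := by
  simp only [← mul_assoc]
  rw [mul_assoc (u * y), hvu, mul_assoc u y f, hy]

theorem conj_eq_conj_mul_conj_iff (hvu : v * u = f) (huf : u * f = u) {x y z : M}
    (hx : x ∈ Subsemigroup.corner f) (hy : y ∈ Subsemigroup.corner f)
    (hz : z ∈ Subsemigroup.corner f) :
    u * x * v = u * y * v * (u * z * v) ↔ x = y * z := by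
  have hyf := ((Subsemigroup.mem_corner_iff (isIdempotentElem_of_mul_eq hvu huf)).mp hy).2
  rw [conj_mul_conj hvu hyf]
  refine ⟨fun h => ?_, fun h => h ▸ rfl⟩
  rw [← mul_conj_mul_eq_self_of_mem_corner hvu huf hx, h,
    mul_conj_mul_eq_self_of_mem_corner hvu huf (Subsemigroup.mul_mem _ hy hz)]

end Corner

section Convolution

open WithConv

variable {k : Type*} [CommRing k] {A : Type*} [Ring A] [Algebra k A]

theorem toConv_conv {C : Type*} [AddCommMonoid C] [Module k C] [Coalgebra k C]
    (φ ψ : C →ₗ[k] A) : toConv (conv k φ ψ) = toConv φ * toConv ψ :=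
  rfl

theorem mulRight_comp_conv {C : Type*} [AddCommMonoid C] [Module k C] [Coalgebra k C]
    (a : A) (φ ψ : C →ₗ[k] A) :
    mulRight k a ∘ₗ conv k φ ψ = conv k φ (mulRight k a ∘ₗ ψ) := by
  ext c
  simp only [conv, LinearMap.comp_apply]
  induction Coalgebra.comul (R := k) c using TensorProduct.induction_on with
  | zero => simp
  | tmul x y => simp [mul_assoc]
  | add x y hx hy => simp_all [add_mul]

variable {H : Type*} [Ring H] [Algebra k H] [Coalgebra k H]

theorem toConv_smul3 (u v : H →ₗ[k] A) (a : A) :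
    toConv (smul3 k H u v a) = toConv (mulRight k a ∘ₗ u) * toConv v := by
  ext c
  simp only [smul3, LinearMap.comp_apply, convMul_apply]
  induction Coalgebra.comul (R := k) c using TensorProduct.induction_on with
  | zero => simp
  | tmul x y => simp
  | add x y hx hy => simp_all

theorem toConv_smul3_mem_corner {f : H →ₗ[k] A} (hf : conv k f f = f) (a : A) :
    toConv (smul3 k H f f a) ∈ Subsemigroup.corner (toConv f) :=
  ⟨toConv (mulRight k a ∘ₗ f), by
    show toConv f * _ * toConv f = _
    rw [toConv_smul3, ← toConv_conv f, ← mulRight_comp_conv, hf]⟩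

theorem toConv_smul3_eq_conj {f u v : H →ₗ[k] A} (huf : conv k u f = u) (hfv : conv k f v = v)
    (a : A) : toConv (smul3 k H u v a) = toConv u * toConv (smul3 k H f f a) * toConv v :=
  calc toConv (smul3 k H u v a)
      = toConv (mulRight k a ∘ₗ conv k u f) * toConv (conv k f v) := by
        rw [huf, hfv, toConv_smul3]
    _ = toConv u * toConv (smul3 k H f f a) * toConv v := by
        rw [mulRight_comp_conv, toConv_conv, toConv_conv, toConv_smul3]
        simp only [mul_assoc]

end Convolution

section Statement

variable (k : Type*) [Field k] (H : Type*) [Ring H] [Algebra k H] [Coalgebra k H]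
  [FiniteDimensional k H] (A : Type*) [Ring A] [Algebra k A]

theorem smul_mul_iff (f u v : H →ₗ[k] A) (hvu : conv k v u = f)
    (huf : conv k u f = u) (hfv : conv k f v = v) :
    (∀ (h : H) (a b : A),
        smul3 k H u v (a * b) h = conv k (smul3 k H u v a) (smul3 k H u v b) h) ↔
      (∀ (h : H) (a b : A),
        smul3 k H f f (a * b) h = conv k (smul3 k H f f a) (smul3 k H f f b) h) := by
  open WithConv in
  have hvu' : toConv v * toConv u = toConv f := congrArg toConv hvu
  have huf' : toConv u * toConv f = toConv u := congrArg toConv huf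
  have hf : conv k f f = f := congrArg ofConv (isIdempotentElem_of_mul_eq hvu' huf').eq
  have key (a b : A) :
      smul3 k H u v (a * b) = conv k (smul3 k H u v a) (smul3 k H u v b) ↔
        smul3 k H f f (a * b) = conv k (smul3 k H f f a) (smul3 k H f f b) := by
    have h := conj_eq_conj_mul_conj_iff hvu' huf' (toConv_smul3_mem_corner hf (a * b))
      (toConv_smul3_mem_corner hf a) (toConv_smul3_mem_corner hf b)
    simp only [← toConv_smul3_eq_conj huf hfv] at h
    simpa only [← toConv_conv, toConv_injective.eq_iff] using h
  simp only [forall_comm (α := H), ← LinearMap.ext_iff, key]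

end Statement
end
end

section
/- Let H be a weak Hopf algebra, A an algebra, u ∈ Hom(H,A) an (e,f)-invertible element, and define h · a = u(h₁) a u⁻¹(h₂). Then h · 1_A = ε_t(h) · 1_A for all h ∈ H if and only if e ∘ ε_t = e, if and only if ker(ε_t) ⊆ ker(e). -/
open TensorProduct LinearMap

noncomputable section

/-!
Since `smul3 u v 1 = u * v = e`, the first equivalence is a restatement. The second holds for
every idempotent endomorphism in place of `ε_t`, and `ε_t` is idempotent because
`ε(g ε_t(h)) = ε(g h)`, which is the weak multiplicativity of the counit `ε(g h) = ε(g 1₂) ε(1₁ h)`.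
-/

section WeakHopf

variable {k : Type*} [CommRing k] {H : Type*} [Ring H] [Algebra k H] [Coalgebra k H]

theorem smul3_one {A : Type*} [Ring A] [Algebra k A] (u v : H →ₗ[k] A) :
    smul3 k H u v 1 = conv k u v := by
  have hlift : TensorProduct.lift ((mul k A ∘ₗ mulRight k (1 : A) ∘ₗ u).compl₂ v) =
      mul' k A ∘ₗ TensorProduct.map u v := by
    ext g h
    simp
  rw [smul3, conv, hlift, comp_assoc]

theorem epsT_eq_sum {s : Finset (H × H)}
    (hs : Coalgebra.comul (R := k) (1 : H) = ∑ p ∈ s, p.1 ⊗ₜ[k] p.2) (h : H) :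
    epsT k H h = ∑ p ∈ s, Coalgebra.counit (R := k) (p.1 * h) • p.2 := by
  simp only [epsT, comp_apply, flip_apply, mk_apply, mulLeft_apply, hs, Finset.sum_mul,
    Algebra.TensorProduct.tmul_mul_tmul, mul_one, map_sum, map_tmul, id_coe, id_eq,
    LinearEquiv.coe_coe, lid_tmul]

variable {S : H →ₗ[k] H}

theorem IsWeakHopf.counit_mul_eq_sum (hH : IsWeakHopf k H S) {s : Finset (H × H)}
    (hs : Coalgebra.comul (R := k) (1 : H) = ∑ p ∈ s, p.1 ⊗ₜ[k] p.2) (g h : H) :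
    Coalgebra.counit (R := k) (g * h) =
      ∑ p ∈ s, Coalgebra.counit (R := k) (p.1 * h) * Coalgebra.counit (R := k) (g * p.2) := by
  rw [← mul_one g, hH.counit_mul_right g 1 h, mul_one]
  simp [conv, hs]

theorem IsWeakHopf.counit_mul_epsT (hH : IsWeakHopf k H S) (g h : H) :
    Coalgebra.counit (R := k) (g * epsT k H h) = Coalgebra.counit (R := k) (g * h) := by
  obtain ⟨s, hs⟩ := TensorProduct.exists_finset (Coalgebra.comul (R := k) (1 : H))
  simp only [epsT_eq_sum hs, Finset.mul_sum, mul_smul_comm, map_sum, map_smul, smul_eq_mul]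
  rw [hH.counit_mul_eq_sum hs g h]

theorem IsWeakHopf.isIdempotentElem_epsT (hH : IsWeakHopf k H S) :
    IsIdempotentElem (epsT k H) := by
  ext h
  obtain ⟨s, hs⟩ := TensorProduct.exists_finset (Coalgebra.comul (R := k) (1 : H))
  rw [Module.End.mul_apply, epsT_eq_sum hs (epsT k H h)]
  simp only [hH.counit_mul_epsT, ← epsT_eq_sum hs h]

end WeakHopf

section Statement

variable (k : Type*) [Field k] (H : Type*) [Ring H] [Algebra k H] [Coalgebra k H]
  [FiniteDimensional k H] (A : Type*) [Ring A] [Algebra k A]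

theorem smul_one_iff (S : H →ₗ[k] H) (hH : IsWeakHopf k H S)
    (e u v : H →ₗ[k] A)
    (huv : conv k u v = e) :
    ((∀ h : H, smul3 k H u v (1 : A) h = smul3 k H u v (1 : A) (epsT k H h)) ↔
        e ∘ₗ epsT k H = e) ∧
      (e ∘ₗ epsT k H = e ↔ LinearMap.ker (epsT k H) ≤ LinearMap.ker e) := by
  refine ⟨?_, hH.isIdempotentElem_epsT.comp_eq_left_iff e⟩
  rw [smul3_one, huv, LinearMap.ext_iff]
  exact forall_congr' fun h => eq_comm

end Statement
end
end

section
/- Let H be a weak Hopf algebra, A an algebra, u ∈ Hom(H,A) an (e,f)-invertible element with f(H) ⊆ Z(A), and define h · a = u(h₁) a u⁻¹(h₂). Then g · (h · a) = (gh) · a for all g, h ∈ H, a ∈ A if and only if g · e(h) = e(gh) for all g, h and the bilinear map t(g,h) = u⁻¹(h₁)u⁻¹(g₁)u(g₂h₂) takes values in the center Z(A). -/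
open TensorProduct LinearMap

noncomputable section

/-!
Work in the convolution monoid of linear maps `H ⊗ H → A`.  With `μ` the multiplication of `H`,
`U = u ∘ μ`, `V = v ∘ μ`, `F = f ∘ μ`, `P(g ⊗ h) = u(g) u(h)`, `Q(g ⊗ h) = v(h) v(g)`,
`W(g ⊗ h) = f(g) f(h)` and `c_a(x) = ε(x) a`, associativity at `a` says `P c_a Q = U c_a V`
and `t = Q U`.  Multiplicativity of `Δ` and centrality of `f` give `U F = U`, `V U = F`,
`Q P = W`, `W Q = Q`, with `F` and `W` commuting with every `c_a`; in any monoid these relations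
together with `P Q = U V` (the case `a = 1`) make `P c Q = U c V` equivalent to `Q U` commuting
with `c`.
-/
open Coalgebra WithConv

theorem mul_mul_eq_iff_commute {R : Type*} [Monoid R] {u v f p q w c : R}
    (huf : u * f = u) (hvu : v * u = f) (hqp : q * p = w) (hwq : w * q = q)
    (hpq : p * q = u * v) (hfc : Commute f c) (hwc : Commute w c) :
    p * c * q = u * c * v ↔ Commute (q * u) c := by
  constructor
  · intro h
    calc q * u * c = q * (u * f) * c := by rw [huf]
      _ = q * u * (c * f) := by rw [← hfc.eq]; simp only [mul_assoc]
      _ = q * (u * c * v) * u := by rw [← hvu]; simp only [mul_assoc]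
      _ = q * p * c * q * u := by rw [← h]; simp only [mul_assoc]
      _ = c * (q * u) := by rw [hqp, hwc.eq, mul_assoc c w q, hwq, mul_assoc]
  · intro h
    calc p * c * q = p * c * (q * p * q) := by rw [hqp, hwq]
      _ = p * (q * u * c) * v := by rw [h.eq, mul_assoc q p q, hpq]; simp only [mul_assoc]
      _ = p * q * u * c * v := by simp only [mul_assoc]
      _ = u * c * v := by rw [hpq, mul_assoc u v u, hvu, huf]

theorem forall_mul_mul_eq_iff_commute {R ι : Type*} [Monoid R] {u v f p q w : R} (c : ι → R)
    {i₀ : ι} (hc : c i₀ = 1) (huf : u * f = u) (hvu : v * u = f) (hqp : q * p = w)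
    (hwq : w * q = q) (hfc : ∀ i, Commute f (c i)) (hwc : ∀ i, Commute w (c i)) :
    (∀ i, p * c i * q = u * c i * v) ↔ p * q = u * v ∧ ∀ i, Commute (q * u) (c i) := by
  have key := fun hpq i => mul_mul_eq_iff_commute huf hvu hqp hwq hpq (hfc i) (hwc i)
  refine ⟨fun h => ?_, fun ⟨hpq, hcomm⟩ i => (key hpq i).2 (hcomm i)⟩
  have hpq : p * q = u * v := by simpa only [hc, mul_one] using h i₀
  exact ⟨hpq, fun i => (key hpq i).1 (h i)⟩

section ConvConst

variable {k C A : Type*} [CommRing k] [AddCommMonoid C] [Module k C] [Coalgebra k C]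
  [Ring A] [Algebra k A]

def convConst (a : A) : WithConv (C →ₗ[k] A) :=
  toConv (toSpanSingleton k A a ∘ₗ counit)

lemma convConst_mul_apply (a : A) (φ : WithConv (C →ₗ[k] A)) (x : C) :
    (convConst a * φ).ofConv x = a * φ.ofConv x := by
  simp [convConst, ← map_comp_rTensor]

lemma mul_convConst_apply (a : A) (φ : WithConv (C →ₗ[k] A)) (x : C) :
    (φ * convConst a).ofConv x = φ.ofConv x * a := by
  simp [convConst, ← map_comp_lTensor]

@[simp] lemma convConst_one : (convConst 1 : WithConv (C →ₗ[k] A)) = 1 := by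
  ext x; simp [convConst, Algebra.algebraMap_eq_smul_one]

lemma commute_convConst_iff {φ : WithConv (C →ₗ[k] A)} {a : A} :
    Commute φ (convConst a) ↔ ∀ x, Commute (φ.ofConv x) a := by
  simp only [Commute, SemiconjBy, WithConv.ext_iff, LinearMap.ext_iff, mul_convConst_apply,
    convConst_mul_apply]

lemma forall_commute_convConst_iff {φ : WithConv (C →ₗ[k] A)} :
    (∀ a : A, Commute φ (convConst a)) ↔ ∀ x, φ.ofConv x ∈ Set.center A := by
  simp only [commute_convConst_iff, Semigroup.mem_center_iff]
  exact forall_comm.trans (forall₂_congr fun _ _ => (commute_iff_eq _ _).trans eq_comm)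

lemma commute_convConst_of_mem_center (φ : WithConv (C →ₗ[k] A)) {b : A}
    (hb : b ∈ Set.center A) : Commute φ (convConst b) :=
  commute_convConst_iff.2 fun _ => Semigroup.mem_center_iff.1 hb _

end ConvConst

lemma forall_tmul_mem_center_iff {k C D A : Type*} [CommRing k] [AddCommMonoid C] [Module k C]
    [AddCommMonoid D] [Module k D] [Ring A] [Algebra k A] {Φ : C ⊗[k] D →ₗ[k] A} :
    (∀ x y, Φ (x ⊗ₜ y) ∈ Set.center A) ↔ ∀ z, Φ z ∈ Set.center A := by
  refine ⟨fun hΦ z => ?_, fun hΦ _ _ => hΦ _⟩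
  induction z using TensorProduct.induction_on with
  | zero => rw [map_zero]; exact Set.zero_mem_center
  | tmul x y => exact hΦ x y
  | add z z' hz hz' => rw [map_add]; exact Set.add_mem_center hz hz'

section TensorProduct

variable {k C D A : Type*} [CommRing k] [AddCommMonoid C] [Module k C] [Coalgebra k C]
  [AddCommMonoid D] [Module k D] [Coalgebra k D] [Ring A] [Algebra k A]

lemma convMul_tmul_apply {ι κ : Type*} {x : C} {y : D} (𝓡x : Coalgebra.Repr k x ι)
    (𝓡y : Coalgebra.Repr k y κ) (Φ Ψ : WithConv (C ⊗[k] D →ₗ[k] A)) :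
    (Φ * Ψ).ofConv (x ⊗ₜ y) = ∑ i ∈ 𝓡x.index, ∑ j ∈ 𝓡y.index,
      Φ.ofConv (𝓡x.left i ⊗ₜ 𝓡y.left j) * Ψ.ofConv (𝓡x.right i ⊗ₜ 𝓡y.right j) := by
  simp [← 𝓡x.eq, ← 𝓡y.eq, sum_tmul, tmul_sum, AlgebraTensorModule.tensorTensorTensorComm_eq]
  exact Finset.sum_comm

def mulMap (φ : C →ₗ[k] A) (ψ : D →ₗ[k] A) : WithConv (C ⊗[k] D →ₗ[k] A) :=
  toConv (mul' k A ∘ₗ map φ ψ)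

def mulMapRev (φ : C →ₗ[k] A) (ψ : D →ₗ[k] A) : WithConv (C ⊗[k] D →ₗ[k] A) :=
  toConv (mul' k A ∘ₗ map ψ φ ∘ₗ (TensorProduct.comm k C D).toLinearMap)

lemma mulMap_mul_convConst_mul_mulMapRev_tmul (φ χ : C →ₗ[k] A) (ψ ω : D →ₗ[k] A) (a : A)
    (x : C) (y : D) :
    (mulMap φ ψ * convConst a * mulMapRev χ ω).ofConv (x ⊗ₜ y) =
      (toConv φ * convConst ((toConv ψ * convConst a * toConv ω).ofConv y) *
        toConv χ).ofConv x := by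
  rw [convMul_tmul_apply (ℛ k x) (ℛ k y), (ℛ k x).convMul_apply]
  simp only [mulMap, mulMapRev, mul_convConst_apply, convConst_mul_apply, (ℛ k y).convMul_apply,
    ofConv_toConv, comp_apply, LinearEquiv.coe_coe, comm_tmul, map_tmul, mul'_apply,
    Finset.mul_sum, Finset.sum_mul, mul_assoc]

lemma mulMapRev_mul_mulMap_tmul (φ χ : C →ₗ[k] A) (ψ ω : D →ₗ[k] A) (x : C) (y : D) :
    (mulMapRev φ ψ * mulMap χ ω).ofConv (x ⊗ₜ y) =
      (toConv ψ * convConst ((toConv φ * toConv χ).ofConv x) * toConv ω).ofConv y := by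
  rw [convMul_tmul_apply (ℛ k x) (ℛ k y), (ℛ k y).convMul_apply, Finset.sum_comm]
  simp only [mulMap, mulMapRev, mul_convConst_apply, (ℛ k x).convMul_apply, ofConv_toConv,
    comp_apply, LinearEquiv.coe_coe, comm_tmul, map_tmul, mul'_apply, Finset.mul_sum,
    Finset.sum_mul, mul_assoc]

lemma mulMapRev_mul_mulMap (φ χ : C →ₗ[k] A) (ψ ω : D →ₗ[k] A)
    (hφχ : ∀ x, (toConv φ * toConv χ).ofConv x ∈ Set.center A) :
    mulMapRev φ ψ * mulMap χ ω =
      mulMap (toConv φ * toConv χ).ofConv (toConv ψ * toConv ω).ofConv := by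
  refine WithConv.ext (TensorProduct.ext' fun x y => ?_)
  rw [mulMapRev_mul_mulMap_tmul, (commute_convConst_of_mem_center _ (hφχ x)).eq, mul_assoc,
    convConst_mul_apply]
  rfl

lemma mulMap_mul_mulMapRev (φ χ : C →ₗ[k] A) (ψ ω : D →ₗ[k] A)
    (hφ : ∀ x, φ x ∈ Set.center A) :
    mulMap φ ψ * mulMapRev χ ω =
      mulMapRev (toConv φ * toConv χ).ofConv (toConv ψ * toConv ω).ofConv := by
  refine WithConv.ext (TensorProduct.ext' fun x y => ?_)
  rw [← mul_one (mulMap φ ψ), ← convConst_one, mulMap_mul_convConst_mul_mulMapRev_tmul,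
    (forall_commute_convConst_iff.2 hφ _).eq, mul_assoc, convConst_mul_apply, convConst_one,
    mul_one]
  rfl

lemma comp_mul_convConst (φ : C →ₗ[k] A) (ι : D →ₗ[k] C) (a : A) :
    toConv (φ ∘ₗ ι) * convConst a = toConv ((toConv φ * convConst a).ofConv ∘ₗ ι) :=
  WithConv.ext (LinearMap.ext fun x => by simp only [mul_convConst_apply, comp_apply])

end TensorProduct

section WeakHopf

variable {k H A : Type*} [CommRing k] [Ring H] [Algebra k H] [Coalgebra k H] [Ring A]
  [Algebra k A]

lemma conv_eq_ofConv_mul (φ ψ : H →ₗ[k] A) : conv k φ ψ = (toConv φ * toConv ψ).ofConv := rfl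

lemma smul3_eq_ofConv_mul (u v : H →ₗ[k] A) (a : A) :
    smul3 k H u v a = (toConv u * convConst a * toConv v).ofConv := by
  ext x
  rw [(ℛ k x).convMul_apply]
  simp only [mul_convConst_apply]
  simp [smul3, ← (ℛ k x).eq]

lemma tmap_eq_ofConv_mul (u v : H →ₗ[k] A) :
    tmap k H u v = (mulMapRev v v * toConv (u ∘ₗ mul' k H)).ofConv := rfl

lemma comul_comp_mul' (hmul : ∀ g h : H, comul (R := k) (g * h) = comul g * comul h) :
    comul ∘ₗ mul' k H = map (mul' k H) (mul' k H) ∘ₗ comul := by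
  refine TensorProduct.ext' fun g h => ?_
  rw [comp_apply, mul'_apply, hmul, ← mul'_apply (R := k), mul'_tensor]
  simp [AlgebraTensorModule.tensorTensorTensorComm_eq]

lemma comp_mul'_mul_comp_mul' (hmul : ∀ g h : H, comul (R := k) (g * h) = comul g * comul h)
    (φ ψ : H →ₗ[k] A) :
    toConv (φ ∘ₗ mul' k H) * toConv (ψ ∘ₗ mul' k H) =
      toConv ((toConv φ * toConv ψ).ofConv ∘ₗ mul' k H) := by
  simp only [LinearMap.convMul_def, ofConv_toConv, map_comp, comp_assoc, comul_comp_mul' hmul]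

lemma smul3_smul3_eq_smul3_mul_iff
    (hmul : ∀ g h : H, comul (R := k) (g * h) = comul g * comul h) (u v : H →ₗ[k] A) (a : A) :
    (∀ g h, smul3 k H u v (smul3 k H u v a h) g = smul3 k H u v a (g * h)) ↔
      mulMap u u * convConst a * mulMapRev v v =
        toConv (u ∘ₗ mul' k H) * convConst a * toConv (v ∘ₗ mul' k H) := by
  have hlhs : ∀ g h, (mulMap u u * convConst a * mulMapRev v v).ofConv (g ⊗ₜ h) =
      smul3 k H u v (smul3 k H u v a h) g := by
    simp only [mulMap_mul_convConst_mul_mulMapRev_tmul, smul3_eq_ofConv_mul, forall_const]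
  rw [comp_mul_convConst, comp_mul'_mul_comp_mul' hmul, ← smul3_eq_ofConv_mul]
  refine ⟨fun h => WithConv.ext (TensorProduct.ext' fun g h' => ?_), fun h g h' => ?_⟩
  · rw [hlhs, h]; rfl
  · rw [← hlhs, h]; rfl

end WeakHopf

section Statement

variable (k : Type*) [Field k] (H : Type*) [Ring H] [Algebra k H] [Coalgebra k H]
  [FiniteDimensional k H] (A : Type*) [Ring A] [Algebra k A]

theorem smul_assoc_iff (S : H →ₗ[k] H) (hH : IsWeakHopf k H S)
    (e f u v : H →ₗ[k] A)
    (huv : conv k u v = e) (hvu : conv k v u = f)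
    (huf : conv k u f = u) (hfv : conv k f v = v)
    (hfcentral : ∀ h : H, f h ∈ Set.center A) :
    (∀ (g h : H) (a : A),
        smul3 k H u v (smul3 k H u v a h) g = smul3 k H u v a (g * h)) ↔
      ((∀ g h : H, smul3 k H u v (e h) g = e (g * h)) ∧
        ∀ g h : H, tmap k H u v (g ⊗ₜ h) ∈ Set.center A) := by
  rw [conv_eq_ofConv_mul] at huv hvu huf hfv
  have hUF : toConv (u ∘ₗ mul' k H) * toConv (f ∘ₗ mul' k H) = toConv (u ∘ₗ mul' k H) := by
    rw [comp_mul'_mul_comp_mul' hH.comul_mul, huf]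
  have hVU : toConv (v ∘ₗ mul' k H) * toConv (u ∘ₗ mul' k H) = toConv (f ∘ₗ mul' k H) := by
    rw [comp_mul'_mul_comp_mul' hH.comul_mul, hvu]
  have hQP : mulMapRev v v * mulMap u u = mulMap f f := by
    rw [mulMapRev_mul_mulMap _ _ _ _ (hvu ▸ hfcentral), hvu]
  have hWQ : mulMap f f * mulMapRev v v = mulMapRev v v := by
    rw [mulMap_mul_mulMapRev _ _ _ _ hfcentral, hfv]
  have hF : ∀ a : A, Commute (toConv (f ∘ₗ mul' k H)) (convConst a) :=
    forall_commute_convConst_iff.2 fun _ => hfcentral _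
  have hW : ∀ a : A, Commute (mulMap f f) (convConst a) :=
    forall_commute_convConst_iff.2 <| forall_tmul_mem_center_iff.1 fun x y => by
      simpa [mulMap] using Set.mul_mem_center (hfcentral x) (hfcentral y)
  have hassoc := smul3_smul3_eq_smul3_mul_iff hH.comul_mul u v
  have he : smul3 k H u v 1 = e := by rw [smul3_eq_ofConv_mul, convConst_one, mul_one, huv]
  rw [← he, hassoc 1, convConst_one, mul_one, mul_one, forall_tmul_mem_center_iff,
    tmap_eq_ofConv_mul, ← forall_commute_convConst_iff,
    ← forall_mul_mul_eq_iff_commute convConst convConst_one hUF hVU hQP hWQ hF hW]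
  exact ⟨fun h a => (hassoc a).1 fun g h' => h g h' a, fun h g h' a => (hassoc a).2 (h a) g h'⟩

end Statement
end
end

section
/- Let H be a weak Hopf algebra, A an algebra, u ∈ Hom(H,A) an (e,f)-invertible element with u(H_s) ⊆ Z(A) and e(1_H) = 1_A. Then 1_H · a = a for all a ∈ A, where h · a = u(h₁) a u⁻¹(h₂). -/
/-! Since `Δ(1) = ε_s(1₁) ⊗ 1₂` in a weak Hopf algebra and `ε_s` is idempotent, the left leg of
`Δ(1)` may be taken in `H_s`, where `u` is central. Hence
`1 · a = u(ε_s(1₁)) a v(1₂) = a u(ε_s(1₁)) v(1₂) = a u(1₁) v(1₂) = a e(1) = a`. -/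

open TensorProduct LinearMap

noncomputable section

section SourceCounit

variable {k : Type*} [CommRing k] {H : Type*} [Ring H] [Algebra k H] [Coalgebra k H]
  {A : Type*} [Ring A] [Algebra k A]

theorem epsS_apply (h : H) :
    epsS k H h = TensorProduct.rid k H (TensorProduct.map LinearMap.id
      (Coalgebra.counit ∘ₗ LinearMap.mulLeft k h) (Coalgebra.comul (R := k) (1 : H))) := by
  simp only [epsS, LinearMap.comp_apply, TensorProduct.mk_apply, LinearMap.mulRight_apply,
    LinearEquiv.coe_coe]
  induction Coalgebra.comul (R := k) (1 : H) using TensorProduct.induction_on with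
  | zero => simp
  | tmul x y => simp [Algebra.TensorProduct.tmul_mul_tmul]
  | add x y hx hy => simp only [mul_add, map_add, hx, hy]

theorem smul3_eq_mul_conv {u : H →ₗ[k] A} (hu : ∀ h, u h ∈ Set.center A) (v : H →ₗ[k] A)
    (a : A) (h : H) : smul3 k H u v a h = a * conv k u v h := by
  simp only [smul3, conv, LinearMap.comp_apply]
  induction Coalgebra.comul (R := k) h using TensorProduct.induction_on with
  | zero => simp
  | tmul x y => simp [((Set.mem_center_iff.mp (hu x)).comm a).eq, mul_assoc]
  | add x y hx hy => simp only [map_add, hx, hy, mul_add]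

namespace IsWeakHopf

variable {S : H →ₗ[k] H}

/-- Apply `id ⊗ ε ⊗ id` to `(Δ ⊗ id) Δ(1) = (1 ⊗ Δ(1)) (Δ(1) ⊗ 1)`: the left side collapses to
`Δ(1)` by counitality, the right side to `ε_s(1₁) ⊗ 1₂`. -/
theorem map_epsS_id_comul_one (hH : IsWeakHopf k H S) :
    TensorProduct.map (epsS k H) LinearMap.id (Coalgebra.comul (R := k) (1 : H)) =
      Coalgebra.comul (R := k) (1 : H) := by
  set L : (H ⊗[k] H) ⊗[k] H →ₗ[k] H ⊗[k] H := TensorProduct.map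
    ((TensorProduct.rid k H).toLinearMap ∘ₗ TensorProduct.map LinearMap.id Coalgebra.counit)
    LinearMap.id
  have hcounit : ∀ x : H ⊗[k] H,
      L (TensorProduct.map (Coalgebra.comul (R := k)) LinearMap.id x) = x := by
    intro x
    induction x using TensorProduct.induction_on with
    | zero => simp
    | tmul x y => simp [L, ← LinearMap.lTensor_def, Coalgebra.lTensor_counit_comul]
    | add x y hx hy => simp only [map_add, hx, hy]
  have hsplit : ∀ x : H ⊗[k] H,
      L ((TensorProduct.assoc k H H H).symm ((1 : H) ⊗ₜ x) *
        (Coalgebra.comul (R := k) (1 : H) ⊗ₜ (1 : H))) =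
        TensorProduct.map (epsS k H) LinearMap.id x := by
    intro x
    induction x using TensorProduct.induction_on with
    | zero => simp
    | tmul x y => simp [L, epsS, Algebra.TensorProduct.tmul_mul_tmul]
    | add x y hx hy => simp only [TensorProduct.tmul_add, map_add, add_mul, hx, hy]
  rw [← hsplit, ← hH.comul_one_right, hcounit]

theorem epsS_epsS (hH : IsWeakHopf k H S) (h : H) : epsS k H (epsS k H h) = epsS k H h := by
  set φ := Coalgebra.counit (R := k) ∘ₗ LinearMap.mulLeft k h
  have hnat : ∀ x : H ⊗[k] H,
      epsS k H (TensorProduct.rid k H (TensorProduct.map LinearMap.id φ x)) =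
        TensorProduct.rid k H (TensorProduct.map LinearMap.id φ
          (TensorProduct.map (epsS k H) LinearMap.id x)) := by
    intro x
    induction x using TensorProduct.induction_on with
    | zero => simp
    | tmul x y => simp
    | add x y hx hy => simp only [map_add, hx, hy]
  rw [epsS_apply h, hnat, hH.map_epsS_id_comul_one]

theorem conv_comp_epsS_one (hH : IsWeakHopf k H S) (u v : H →ₗ[k] A) :
    conv k (u ∘ₗ epsS k H) v 1 = conv k u v 1 := by
  simp only [conv, LinearMap.comp_apply]
  conv_rhs => rw [← hH.map_epsS_id_comul_one, TensorProduct.map_map, LinearMap.comp_id]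

theorem smul3_comp_epsS_one (hH : IsWeakHopf k H S) (u v : H →ₗ[k] A) (a : A) :
    smul3 k H (u ∘ₗ epsS k H) v a 1 = smul3 k H u v a 1 := by
  conv_rhs => rw [smul3, LinearMap.comp_apply, ← hH.map_epsS_id_comul_one]
  rw [← LinearMap.comp_apply (TensorProduct.lift _), TensorProduct.lift_comp_map]
  rfl

end IsWeakHopf

end SourceCounit

section Statement

variable (k : Type*) [Field k] (H : Type*) [Ring H] [Algebra k H] [Coalgebra k H]
  [FiniteDimensional k H] (A : Type*) [Ring A] [Algebra k A]

theorem one_smul_of_central (S : H →ₗ[k] H) (hH : IsWeakHopf k H S)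
    (e u v : H →ₗ[k] A)
    (huv : conv k u v = e)
    (hus : ∀ h : H, epsS k H h = h → u h ∈ Set.center A)
    (he1 : e 1 = 1) :
    ∀ a : A, smul3 k H u v a 1 = a := by
  intro a
  have hcentral : ∀ h, (u ∘ₗ epsS k H) h ∈ Set.center A := fun h => hus _ (hH.epsS_epsS h)
  calc smul3 k H u v a 1
      = smul3 k H (u ∘ₗ epsS k H) v a 1 := (hH.smul3_comp_epsS_one u v a).symm
    _ = a * conv k u v 1 := by rw [smul3_eq_mul_conv hcentral, hH.conv_comp_epsS_one]
    _ = a := by rw [huv, he1, mul_one]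

end Statement
end
end

section
/- Let H be a weak Hopf algebra, A an algebra, u ∈ Hom(H,A) an (e,f)-invertible element with convolution inverse u⁻¹, and suppose the element λ(1) = u(1₁) ⊗ u⁻¹(1₂) ∈ A ⊗ A satisfies (s ⊗ 1)λ(1) = λ(1)(1 ⊗ s) for all s ∈ u(H_s). If 1_H · a = a for all a ∈ A (where h · a = u(h₁)au⁻¹(h₂)), then e(1_H) = 1_A and u(H_s) ⊆ Z(A). -/
/-!
Write `λ = u(1₁) ⊗ v(1₂)` and `μₐ(x ⊗ y) = x a y`, so that `1 · a = μₐ(λ)`. The hypothesis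
says `μₐ(λ) = a` for every `a`: for `a = 1` this is `e(1) = 1`. Since `μₐ` is left `A`-linear
through the first tensor factor and right `A`-linear through the second, for `s ∈ u(H_s)` we get
`s a = μₐ((s ⊗ 1) λ) = μₐ(λ (1 ⊗ s)) = a s`.
-/

open TensorProduct LinearMap

noncomputable section

section Sandwich

variable (R : Type*) [CommSemiring R] {A : Type*} [Semiring A] [Algebra R A]

def sandwich (a : A) : A ⊗[R] A →ₗ[R] A :=
  LinearMap.mul' R A ∘ₗ TensorProduct.map (LinearMap.mulRight R a) LinearMap.id

@[simp]
lemma sandwich_tmul (a x y : A) : sandwich R a (x ⊗ₜ y) = x * a * y := rfl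

lemma sandwich_one : sandwich R (1 : A) = LinearMap.mul' R A :=
  TensorProduct.ext' fun x y => by simp

lemma sandwich_tmul_one_mul (a s : A) (x : A ⊗[R] A) :
    sandwich R a ((s ⊗ₜ 1) * x) = s * sandwich R a x := by
  have : sandwich R a ∘ₗ LinearMap.mulLeft R (s ⊗ₜ 1) =
      LinearMap.mulLeft R s ∘ₗ sandwich R a :=
    TensorProduct.ext' fun x y => by simp [mul_assoc]
  exact LinearMap.congr_fun this x

lemma sandwich_mul_one_tmul (a s : A) (x : A ⊗[R] A) :
    sandwich R a (x * (1 ⊗ₜ s)) = sandwich R a x * s := by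
  have : sandwich R a ∘ₗ LinearMap.mulRight R (1 ⊗ₜ s) =
      LinearMap.mulRight R s ∘ₗ sandwich R a :=
    TensorProduct.ext' fun x y => by simp [mul_assoc]
  exact LinearMap.congr_fun this x

variable {R}

lemma mem_center_of_sandwich_eq_self {x : A ⊗[R] A} (hx : ∀ a, sandwich R a x = a) {s : A}
    (hs : (s ⊗ₜ 1) * x = x * (1 ⊗ₜ s)) : s ∈ Set.center A := by
  refine Semigroup.mem_center_iff.mpr fun a => ?_
  calc a * s = sandwich R a (x * (1 ⊗ₜ s)) := by rw [sandwich_mul_one_tmul, hx]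
    _ = sandwich R a ((s ⊗ₜ 1) * x) := by rw [hs]
    _ = s * a := by rw [sandwich_tmul_one_mul, hx]

end Sandwich

lemma smul3_apply {k H A : Type*} [CommRing k] [Ring H] [Algebra k H] [Coalgebra k H] [Ring A]
    [Algebra k A] (u v : H →ₗ[k] A) (a : A) (h : H) :
    smul3 k H u v a h = sandwich k a (TensorProduct.map u v (Coalgebra.comul h)) := by
  have : TensorProduct.lift ((LinearMap.mul k A ∘ₗ LinearMap.mulRight k a ∘ₗ u).compl₂ v) =
      sandwich k a ∘ₗ TensorProduct.map u v :=
    TensorProduct.ext' fun x y => by simp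
  exact LinearMap.congr_fun this (Coalgebra.comul h)

section Statement

variable (k : Type*) [Field k] (H : Type*) [Ring H] [Algebra k H] [Coalgebra k H]
  [FiniteDimensional k H] (A : Type*) [Ring A] [Algebra k A]

theorem central_of_one_smul
    (e u v : H →ₗ[k] A)
    (huv : conv k u v = e)
    (hlambda : ∀ s : A, (∃ h : H, epsS k H h = h ∧ u h = s) →
      (s ⊗ₜ (1 : A)) * (TensorProduct.map u v (Coalgebra.comul (R := k) (1 : H))) =
        (TensorProduct.map u v (Coalgebra.comul (R := k) (1 : H))) * ((1 : A) ⊗ₜ s))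
    (hone : ∀ a : A, smul3 k H u v a 1 = a) :
    e 1 = 1 ∧ ∀ h : H, epsS k H h = h → u h ∈ Set.center A := by
  have hsandwich (a : A) :
      sandwich k a (TensorProduct.map u v (Coalgebra.comul (R := k) (1 : H))) = a := by
    rw [← smul3_apply, hone]
  refine ⟨?_, fun h hh => mem_center_of_sandwich_eq_self hsandwich (hlambda _ ⟨h, hh, rfl⟩)⟩
  rw [← huv, ← hsandwich 1, sandwich_one]
  rfl

end Statement
end
end
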